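/- arXiv:1605.04635 — 2 statements merged into one kernel-verified Lean document; each statement's English description precedes it below -/
import Mathlib

section
/- Let V be a finite set with |V| = n ≥ 2, and for each u ∈ V let p_u ∈ [0,1] and τ_u ∈ ℝ. Fix γ > 0 and δ > 0, and let R be a positive integer with R ≥ n² ln(2 n^{δ+1}) / (2γ²). For each u ∈ V, let X_u^{(1)}, …, X_u^{(R)} be independent identically distributed {0,1}-valued random variables with P(X_u^{(i)} = 1) = p_u (the families for different u need not be independent of each other), and set P̂_u = (1/R) Σ_{i=1}^R X_u^{(i)}. Define f = Σ_{u∈V} min(p_u, τ_u) and f̂ = Σ_{u∈V} min(P̂_u, τ_u). Then P(|f̂ − f| ≤ γ) ≥ 1 − n^{−δ}. -/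
/-!
Each empirical frequency `P̂ u` is the mean of `R` independent `[0,1]`-valued variables with
mean `p u`, so by Hoeffding's inequality it deviates from `p u` by at least `γ / n` with
probability at most `2 exp (-2 R (γ / n)²)`, which the choice of `R` makes at most `n^{-(δ+1)}`.
Since `min (·) (τ u)` is 1-Lipschitz, `|f̂ - f| ≤ ∑ u, |P̂ u - p u|`, so `|f̂ - f| > γ` forces some
node to deviate by at least `γ / n`; a union bound over the `n` nodes bounds the failure
probability by `n^{-δ}`.
-/

open Real MeasureTheory ProbabilityTheory
open scoped NNReal

lemma abs_sum_min_sub_sum_min_le {ι α : Type*} [AddCommGroup α] [LinearOrder α]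
    [IsOrderedAddMonoid α] (s : Finset ι) (x y τ : ι → α) :
    |∑ i ∈ s, min (x i) (τ i) - ∑ i ∈ s, min (y i) (τ i)| ≤ ∑ i ∈ s, |x i - y i| := by
  rw [← Finset.sum_sub_distrib]
  refine (Finset.abs_sum_le_sum_abs _ _).trans (Finset.sum_le_sum fun i _ ↦ ?_)
  simpa using abs_min_sub_min_le_max (x i) (τ i) (y i) (τ i)

lemma mul_two_mul_exp_le_rpow_neg {n R γ δ : ℝ} (hn : 0 < n) (hγ : γ ≠ 0)
    (hR : R ≥ n ^ 2 * log (2 * n ^ (δ + 1)) / (2 * γ ^ 2)) :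
    n * (2 * exp (-2 * R * (γ / n) ^ 2)) ≤ n ^ (-δ) := by
  have hlog : log (2 * n ^ (δ + 1)) ≤ 2 * R * (γ / n) ^ 2 := by
    rw [ge_iff_le, div_le_iff₀ (by positivity)] at hR
    rw [div_pow, ← mul_div_assoc, le_div_iff₀ (by positivity)]
    linarith
  calc n * (2 * exp (-2 * R * (γ / n) ^ 2))
      ≤ n * (2 * exp (-log (2 * n ^ (δ + 1)))) := by gcongr; linarith
    _ = n * (n ^ (δ + 1))⁻¹ := by
        rw [exp_neg, exp_log (by positivity)]
        field_simp
    _ = n ^ (-δ) := by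
        rw [← rpow_neg hn.le, show -δ = 1 + -(δ + 1) by ring, rpow_add hn, rpow_one]

namespace ProbabilityTheory

variable {Ω : Type*} [MeasurableSpace Ω] {μ : Measure Ω}

lemma HasSubgaussianMGF.measureReal_abs_ge_le {X : Ω → ℝ} {c : ℝ≥0}
    (h : HasSubgaussianMGF X c μ) {ε : ℝ} (hε : 0 ≤ ε) :
    μ.real {ω | ε ≤ |X ω|} ≤ 2 * exp (-ε ^ 2 / (2 * c)) := by
  have hsplit : {ω | ε ≤ |X ω|} = {ω | ε ≤ X ω} ∪ {ω | ε ≤ (-X) ω} := by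
    ext ω; simp only [Set.mem_ofPred_eq, Set.mem_union, Pi.neg_apply, le_abs', le_neg, or_comm]
  calc μ.real {ω | ε ≤ |X ω|}
      ≤ μ.real {ω | ε ≤ X ω} + μ.real {ω | ε ≤ (-X) ω} :=
        hsplit ▸ measureReal_union_le _ _
    _ ≤ 2 * exp (-ε ^ 2 / (2 * c)) := by
        linarith [h.measure_ge_le hε, h.neg.measure_ge_le hε]

lemma integral_eq_measureReal_eq_one {Y : Ω → ℝ} (hY : Measurable Y)
    (h01 : ∀ ω, Y ω = 0 ∨ Y ω = 1) : μ[Y] = μ.real {ω | Y ω = 1} := by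
  have hY_eq : Y = {ω | Y ω = 1}.indicator 1 := by
    funext ω
    rcases h01 ω with h | h <;> simp [h]
  conv_lhs => rw [hY_eq]
  exact integral_indicator_one (hY (measurableSet_singleton 1))

variable [IsProbabilityMeasure μ]

lemma one_sub_measureReal_le_of_compl_subset {s t : Set Ω} (h : sᶜ ⊆ t) :
    1 - μ.real t ≤ μ.real s := by
  have := measureReal_union_le (μ := μ) s t
  rw [Set.compl_subset_iff_union.mp h, probReal_univ] at this
  linarith

lemma measureReal_abs_sum_range_div_sub_ge_le {X : ℕ → Ω → ℝ} (hindep : iIndepFun X μ)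
    (hmeas : ∀ i, AEMeasurable (X i) μ) {a b m : ℝ} (hX : ∀ i, ∀ᵐ ω ∂μ, X i ω ∈ Set.Icc a b)
    (hmean : ∀ i, μ[X i] = m) (R : ℕ) {ε : ℝ} (hε : 0 ≤ ε) :
    μ.real {ω | ε ≤ |(∑ i ∈ Finset.range R, X i ω) / R - m|} ≤
      2 * exp (-2 * R * ε ^ 2 / (b - a) ^ 2) := by
  rcases R.eq_zero_or_pos with rfl | hR
  · simpa using measureReal_le_one.trans one_le_two
  have hcentered : iIndepFun (fun i ω ↦ X i ω - μ[X i]) μ :=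
    hindep.comp (fun i (x : ℝ) ↦ x - ∫ ω, X i ω ∂μ) fun _ ↦ measurable_id.sub_const _
  have hsum := HasSubgaussianMGF.sum_of_iIndepFun hcentered (s := Finset.range R)
    fun i _ ↦ hasSubgaussianMGF_of_mem_Icc (hmeas i) (hX i)
  convert hsum.measureReal_abs_ge_le (ε := R * ε) (by positivity) using 3
  · ext ω
    have hrewrite : (∑ i ∈ Finset.range R, X i ω) / R - m
        = (∑ i ∈ Finset.range R, (X i ω - μ[X i])) / R := by
      simp only [hmean, Finset.sum_sub_distrib, Finset.sum_const, Finset.card_range, nsmul_eq_mul]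
      field_simp
    rw [hrewrite, abs_div, Nat.abs_cast, le_div_iff₀ (by positivity), mul_comm]
  · push_cast [Finset.sum_const, Finset.card_range, nsmul_eq_mul, coe_nnnorm, Real.norm_eq_abs]
    rw [div_pow, sq_abs]
    field_simp

end ProbabilityTheory

theorem surrogate_estimate_general {Ω : Type*} [MeasurableSpace Ω]
    (μ : Measure Ω) [IsProbabilityMeasure μ]
    {V : Type*} [Fintype V] (hn : 2 ≤ Fintype.card V)
    (p : V → ℝ) (τ : V → ℝ)
    (γ δ : ℝ) (hγ : 0 < γ)
    (R : ℕ)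
    (hR : (R : ℝ) ≥ (Fintype.card V : ℝ) ^ 2 *
      Real.log (2 * (Fintype.card V : ℝ) ^ (δ + 1)) / (2 * γ ^ 2))
    (X : V → ℕ → Ω → ℝ) (hmeas : ∀ u i, Measurable (X u i))
    (h01 : ∀ u i ω, X u i ω = 0 ∨ X u i ω = 1)
    (hdist : ∀ u i, (μ {ω | X u i ω = 1}).toReal = p u)
    (hindep : ∀ u : V, ProbabilityTheory.iIndepFun (X u) μ) :
    (μ {ω | |(∑ u : V, min ((∑ i ∈ Finset.range R, X u i ω) / (R : ℝ)) (τ u)) -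
        ∑ u : V, min (p u) (τ u)| ≤ γ}).toReal ≥
      1 - (Fintype.card V : ℝ) ^ (-δ) := by
  set n := Fintype.card V
  have hn0 : (0 : ℝ) < n := by exact_mod_cast (by omega : 0 < n)
  set pHat : V → Ω → ℝ := fun u ω ↦ (∑ i ∈ Finset.range R, X u i ω) / R
  set bad : V → Set Ω := fun u ↦ {ω | γ / n ≤ |pHat u ω - p u|}
  have htail (u : V) : μ.real (bad u) ≤ 2 * exp (-2 * R * (γ / n) ^ 2) := by
    simpa using measureReal_abs_sum_range_div_sub_ge_le (a := 0) (b := 1) (hindep u)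
      (fun i ↦ (hmeas u i).aemeasurable)
      (fun i ↦ ae_of_all _ fun ω ↦ by rcases h01 u i ω with h | h <;> simp [h])
      (fun i ↦ (integral_eq_measureReal_eq_one (hmeas u i) (h01 u i)).trans (hdist u i))
      R (ε := γ / n) (by positivity)
  have hgood : {ω | |∑ u, min (pHat u ω) (τ u) - ∑ u, min (p u) (τ u)| ≤ γ}ᶜ ⊆ ⋃ u, bad u := by
    intro ω hω
    by_contra hω'
    simp only [Set.mem_iUnion, not_exists, bad, Set.mem_ofPred_eq, not_le] at hω'
    apply hω
    refine (abs_sum_min_sub_sum_min_le Finset.univ (pHat · ω) p τ).trans ?_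
    calc ∑ u, |pHat u ω - p u| ≤ ∑ _u : V, γ / n := Finset.sum_le_sum fun u _ ↦ (hω' u).le
      _ = γ := by simp [n, field]
  calc μ.real {ω | |∑ u, min (pHat u ω) (τ u) - ∑ u, min (p u) (τ u)| ≤ γ}
      ≥ 1 - μ.real (⋃ u, bad u) := one_sub_measureReal_le_of_compl_subset hgood
    _ ≥ 1 - ∑ u, μ.real (bad u) := by gcongr; exact measureReal_iUnion_fintype_le _
    _ ≥ 1 - n * (2 * exp (-2 * R * (γ / n) ^ 2)) := by
        gcongr
        simpa [n] using Finset.sum_le_sum fun u (_ : u ∈ Finset.univ) ↦ htail u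
    _ ≥ 1 - n ^ (-δ) := by gcongr; exact mul_two_mul_exp_le_rpow_neg hn0 hγ.ne' hR

/-- Monte Carlo estimation error bound for the surrogate function:
with `n = |V| ≥ 2` nodes and `R ≥ n² ln(2n^{δ+1}) / (2γ²)` simulations, where for each
node `u` the indicators `X u 1, …, X u R` are i.i.d. `{0,1}`-valued with mean `p u`,
the estimate `f̂ = Σ_u min(P̂ u, τ u)` of `f = Σ_u min(p u, τ u)` satisfies
`P(|f̂ − f| ≤ γ) ≥ 1 − n^{−δ}`. -/
theorem surrogate_estimate {Ω : Type*} [MeasurableSpace Ω]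
    (μ : Measure Ω) [IsProbabilityMeasure μ]
    {V : Type*} [Fintype V] (hn : 2 ≤ Fintype.card V)
    (p : V → ℝ) (hp0 : ∀ u, 0 ≤ p u) (hp1 : ∀ u, p u ≤ 1) (τ : V → ℝ)
    (γ δ : ℝ) (hγ : 0 < γ) (hδ : 0 < δ)
    (R : ℕ) (hR0 : 0 < R)
    (hR : (R : ℝ) ≥ (Fintype.card V : ℝ) ^ 2 *
      Real.log (2 * (Fintype.card V : ℝ) ^ (δ + 1)) / (2 * γ ^ 2))
    (X : V → ℕ → Ω → ℝ) (hmeas : ∀ u i, Measurable (X u i))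
    (h01 : ∀ u i ω, X u i ω = 0 ∨ X u i ω = 1)
    (hdist : ∀ u i, (μ {ω | X u i ω = 1}).toReal = p u)
    (hindep : ∀ u : V, ProbabilityTheory.iIndepFun (X u) μ) :
    (μ {ω | |(∑ u : V, min ((∑ i ∈ Finset.range R, X u i ω) / (R : ℝ)) (τ u)) -
        ∑ u : V, min (p u) (τ u)| ≤ γ}).toReal ≥
      1 - (Fintype.card V : ℝ) ^ (-δ) :=
  surrogate_estimate_general μ hn p τ γ δ hγ R hR X hmeas h01 hdist hindep
end

section
/- Define q : Finset (Fin 3) → ℝ by q(S) = 1 − (1/2)^{|S|}, and define ρ : Finset (Fin 3) → ℝ by ρ(S) = 1 if q(S) ≥ 7/8 and ρ(S) = 0 otherwise. Then q is monotone and submodular, but ρ is not submodular: taking S = {0}, T = {0,1} and w = 2, one has ρ(S ∪ {w}) − ρ(S) = 0 < 1 = ρ(T ∪ {w}) − ρ(T). -/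
/-- `f` is monotone on finsets: `f S ≤ f T` whenever `S ⊆ T`. -/
def FinsetMonotone {W : Type*} (f : Finset W → ℝ) : Prop :=
  ∀ S T : Finset W, S ⊆ T → f S ≤ f T

/-- `f` is submodular: `f (S ∪ {w}) − f S ≥ f (T ∪ {w}) − f T` for all `S ⊆ T` and `w ∉ T`. -/
def FinsetSubmodular {W : Type*} [DecidableEq W] (f : Finset W → ℝ) : Prop :=
  ∀ S T : Finset W, S ⊆ T → ∀ w ∉ T, f (T ∪ {w}) - f T ≤ f (S ∪ {w}) - f S

/-- Activation probability of the node `u` with three in-neighbors, each edge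
having influence probability `1/2`. -/
noncomputable def qFun (S : Finset (Fin 3)) : ℝ := 1 - (1 / 2 : ℝ) ^ S.card

/-- Number of cumulatively active nodes in the target set `{u}` where `u` has
activation threshold `7/8`. -/
noncomputable def rhoFun (S : Finset (Fin 3)) : ℝ := if qFun S ≥ 7 / 8 then 1 else 0

lemma card_union_single {S : Finset (Fin 3)} {w : Fin 3} (hw : w ∉ S) :
    (S ∪ {w}).card = S.card + 1 := by
  rw [Finset.union_comm, ← Finset.insert_eq, Finset.card_insert_of_notMem hw]

lemma rho_eval (S : Finset (Fin 3)) : rhoFun S = if S.card = 3 then 1 else 0 := by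
  unfold rhoFun qFun
  have h3 : S.card ≤ 3 := le_trans (Finset.card_le_univ S) (by simp)
  interval_cases h : S.card <;> norm_num

/-- `qFun` is monotone and submodular, but `rhoFun` is not submodular, as witnessed by
`S = {0}`, `T = {0, 1}`, `w = 2`. -/
theorem rho_not_submodular :
    FinsetMonotone qFun ∧ FinsetSubmodular qFun ∧ ¬ FinsetSubmodular rhoFun ∧
      (rhoFun ({0} ∪ {2}) - rhoFun {0} = 0 ∧
        rhoFun ({0, 1} ∪ {2}) - rhoFun {0, 1} = 1) := by
  have hq : ∀ S : Finset (Fin 3), qFun S = 1 - (1 / 2 : ℝ) ^ S.card := fun _ => rfl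
  refine ⟨?_, ?_, ?_, ?_, ?_⟩
  · intro S T hST
    rw [hq, hq]
    have := Finset.card_le_card hST
    have : (1 / 2 : ℝ) ^ T.card ≤ (1 / 2 : ℝ) ^ S.card :=
      pow_le_pow_of_le_one (by norm_num) (by norm_num) this
    linarith
  · intro S T hST w hwT
    have hwS : w ∉ S := fun h => hwT (hST h)
    rw [hq, hq, hq, hq, card_union_single hwT, card_union_single hwS]
    have h1 : (1 / 2 : ℝ) ^ (S.card + 1) ≤ (1 / 2 : ℝ) ^ S.card := by
      apply pow_le_pow_of_le_one (by norm_num) (by norm_num); omega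
    have h2 : (1 / 2 : ℝ) ^ T.card ≤ (1 / 2 : ℝ) ^ S.card :=
      pow_le_pow_of_le_one (by norm_num) (by norm_num) (Finset.card_le_card hST)
    have h3 : ∀ n : ℕ, ((1 / 2 : ℝ) ^ n - (1 / 2 : ℝ) ^ (n + 1)) = (1/2:ℝ)^(n+1) := by
      intro n; rw [pow_succ]; ring
    have h4 : (1 / 2 : ℝ) ^ (T.card + 1) ≤ (1 / 2 : ℝ) ^ (S.card + 1) :=
      pow_le_pow_of_le_one (by norm_num) (by norm_num)
        (by have := Finset.card_le_card hST; omega)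
    have := h3 S.card; have := h3 T.card
    linarith
  · intro h
    have h2 := h {0} {0, 1} (by decide) 2 (by decide)
    rw [rho_eval, rho_eval, rho_eval, rho_eval, if_pos (by decide), if_neg (by decide),
      if_neg (by decide), if_neg (by decide)] at h2
    norm_num at h2
  · rw [rho_eval, rho_eval, if_neg (by decide), if_neg (by decide)]; norm_num
  · rw [rho_eval, rho_eval, if_pos (by decide), if_neg (by decide)]; norm_num
end
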